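/- Let B be the ball algebra on the closed unit ball of ℂ^d. For each f ∈ B and n ∈ ℕ, the function f_n(z) = (1/(2π)) ∫₀^{2π} f(e^{iθ} z) e^{−inθ} dθ belongs to B, is the restriction of a homogeneous polynomial of degree n, and satisfies ‖f_n‖ ≤ ‖f‖ (supremum norms). Moreover, the Cesàro means of the series Σ_n f_n converge to f in the norm of B: the functions σ_N(f) = Σ_{n=0}^{N} (1 − n/(N+1)) f_n converge uniformly on the closed ball to f as N → ∞. -/

import Mathlib

open MvPolynomial Metric

noncomputable section

abbrev Cd (d : ℕ) := EuclideanSpace ℂ (Fin d)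

abbrev CBall (d : ℕ) : Set (Cd d) := Metric.closedBall (0 : Cd d) 1

instance (d : ℕ) : CompactSpace (CBall d) :=
  isCompact_iff_compactSpace.mp (isCompact_closedBall _ _)

/-- The `i`-th coordinate function on the closed unit ball. -/
def coordFn (d : ℕ) (i : Fin d) : C(CBall d, ℂ) :=
  ⟨fun z => (z : Cd d) i, by exact (continuous_apply i).comp ((PiLp.continuous_ofLp 2 _).comp continuous_subtype_val)⟩

/-- Restriction of a polynomial to the closed unit ball, as an element of
`C(closedBall, ℂ)`. -/
def polyMap (d : ℕ) : MvPolynomial (Fin d) ℂ →ₐ[ℂ] C(CBall d, ℂ) :=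
  aeval (coordFn d)

/-- The ball algebra: the closure, in the Banach algebra of continuous functions on
the closed unit ball of ℂ^d with the supremum norm, of the restrictions of
polynomials. -/
def ballAlg (d : ℕ) : Set C(CBall d, ℂ) := closure (Set.range (polyMap d))

/-- `J` is an ideal of the ball algebra `B`. -/
def IsIdealOfBallAlg (d : ℕ) (J : Set C(CBall d, ℂ)) : Prop :=
  J ⊆ ballAlg d ∧ (0 : C(CBall d, ℂ)) ∈ J ∧
    (∀ f ∈ J, ∀ g ∈ J, f + g ∈ J) ∧ (∀ f ∈ J, ∀ g ∈ ballAlg d, g * f ∈ J)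

/-- The self-map of the closed ball given by `z ↦ t z` for `‖t‖ ≤ 1`. -/
def dilatePt (d : ℕ) (t : ℂ) (ht : ‖t‖ ≤ 1) : C(CBall d, CBall d) :=
  ⟨fun z => ⟨t • (z : Cd d), by
      have hz : ‖(z : Cd d)‖ ≤ 1 := mem_closedBall_zero_iff.mp z.2
      show t • (z : Cd d) ∈ Metric.closedBall 0 1
      rw [mem_closedBall_zero_iff, norm_smul]
      exact mul_le_one₀ ht (norm_nonneg _) hz⟩,
    by exact Continuous.subtype_mk (continuous_subtype_val.const_smul t) _⟩

/-- The dilation `f ↦ (z ↦ f (t z))` on continuous functions on the closed ball. -/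
def dilateFn (d : ℕ) (t : ℂ) (ht : ‖t‖ ≤ 1) (f : C(CBall d, ℂ)) : C(CBall d, ℂ) :=
  f.comp (dilatePt d t ht)

/-- A closed ideal of the ball algebra is homogeneous if it is invariant under all
dilations `z ↦ t z`, `|t| < 1`. -/
def IsHomogBallIdeal (d : ℕ) (J : Set C(CBall d, ℂ)) : Prop :=
  ∀ f ∈ J, ∀ t : ℂ, ∀ ht : ‖t‖ < 1, dilateFn d t ht.le f ∈ J

/-- Rotation `z ↦ e^{iθ} z` on the closed ball. -/
def rotPt (d : ℕ) (θ : ℝ) (z : CBall d) : CBall d :=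
  ⟨Complex.exp (θ * Complex.I) • (z : Cd d), by
    have hz : ‖(z : Cd d)‖ ≤ 1 := mem_closedBall_zero_iff.mp z.2
    show Complex.exp (θ * Complex.I) • (z : Cd d) ∈ Metric.closedBall 0 1
    rw [mem_closedBall_zero_iff, norm_smul]
    have h1 : ‖Complex.exp (θ * Complex.I)‖ = 1 := by
      simp [Complex.norm_exp_ofReal_mul_I θ]
    rw [h1, one_mul]
    exact hz⟩

/-- The `n`-th homogeneous component of `f` at `z`, given by the circle average
`f_n(z) = (1/(2π)) ∫₀^{2π} f(e^{iθ} z) e^{−inθ} dθ`. -/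
def circAvg (d : ℕ) (n : ℕ) (f : C(CBall d, ℂ)) (z : CBall d) : ℂ :=
  (2 * Real.pi)⁻¹ •
    ∫ θ in (0 : ℝ)..(2 * Real.pi), f (rotPt d θ z) * Complex.exp (-(n : ℂ) * θ * Complex.I)

/-!
Rotation `z ↦ e^{iθ} z` turns a polynomial `p` into the one-variable polynomial `t ↦ p (t z)`,
whose `n`-th coefficient is `p_n z`; so on polynomials the circle average `f ↦ f_n` is the
projection onto the homogeneous component of degree `n`. It is a contraction of
`C(closedBall, ℂ)` and the homogeneous polynomials of degree `n` form a finite-dimensional, hence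
closed, subspace, so `f_n` is still a homogeneous polynomial for every `f` in the closure `B`.

Fejér's identity writes `(N + 1) σ_N p z` as the circle average of `p (e^{iθ} z)` against the
kernel `|∑_{k ≤ N} e^{ikθ}|²`, which is nonnegative with mean `N + 1`. Hence `‖σ_N p‖ ≤ ‖p‖` for
polynomials, and by continuity on `B`. The `σ_N` converge to the identity on polynomials (finite
series), and being uniformly bounded they converge on the closure `B` as well.
-/

open Filter Topology Finset Complex ComplexConjugate

lemma integral_exp_int_mul_mul_I (k : ℤ) :
    ∫ θ in (0 : ℝ)..(2 * Real.pi), exp (k * θ * I) = if k = 0 then (2 * Real.pi : ℂ) else 0 := by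
  split_ifs with hk
  · simp [hk]
  · have hc : (k : ℂ) * I ≠ 0 := mul_ne_zero (by exact_mod_cast hk) I_ne_zero
    simp_rw [mul_right_comm _ _ I]
    rw [integral_exp_mul_complex hc]
    have : (k : ℂ) * I * ((2 * Real.pi : ℝ) : ℂ) = k * (2 * Real.pi * I) := by push_cast; ring
    rw [this, exp_int_mul_two_pi_mul_I]
    simp

section Cesaro

variable {E : Type*}

def cesaroMean [AddCommMonoid E] [Module ℝ E] (N : ℕ) (c : ℕ → E) : E :=
  ∑ n ∈ range (N + 1), (1 - (n : ℝ) / (N + 1)) • c n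

lemma cesaroMean_eq_smul_sum_partialSums [AddCommGroup E] [Module ℝ E] (N : ℕ) (c : ℕ → E) :
    cesaroMean N c = ((N : ℝ) + 1)⁻¹ • ∑ l ∈ range (N + 1), ∑ j ∈ range (l + 1), c j := by
  have hswap : ∑ l ∈ range (N + 1), ∑ j ∈ range (l + 1), c j =
      ∑ n ∈ range (N + 1), ((N : ℝ) + 1 - n) • c n := by
    simp_rw [range_eq_Ico]
    rw [← sum_Ico_Ico_comm 0 (N + 1) fun j _ ↦ c j]
    refine sum_congr rfl fun n hn ↦ ?_
    rw [sum_const, Nat.card_Ico, ← Nat.cast_smul_eq_nsmul ℝ, Nat.cast_sub (mem_Ico.mp hn).2.le]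
    push_cast
    ring_nf
  have hN : (N : ℝ) + 1 ≠ 0 := by positivity
  rw [hswap, cesaroMean, smul_sum]
  refine sum_congr rfl fun n _ ↦ ?_
  rw [smul_smul]
  congr 1
  field_simp

lemma tendsto_cesaroMean [NormedAddCommGroup E] [NormedSpace ℝ E] {c : ℕ → E} {a : E}
    (h : Tendsto (fun n ↦ ∑ j ∈ range n, c j) atTop (𝓝 a)) :
    Tendsto (fun N ↦ cesaroMean N c) atTop (𝓝 a) := by
  have hpartial : Tendsto (fun l ↦ ∑ j ∈ range (l + 1), c j) atTop (𝓝 a) :=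
    h.comp (tendsto_add_atTop_nat 1)
  have := hpartial.cesaro_smul.comp (tendsto_add_atTop_nat 1)
  simpa [Function.comp_def, cesaroMean_eq_smul_sum_partialSums] using this

end Cesaro

namespace Polynomial

lemma continuous_eval_exp_mul_I (P : Polynomial ℂ) : Continuous fun θ : ℝ ↦ P.eval (exp (θ * I)) :=
  P.continuous.comp (by fun_prop)

theorem smul_integral_eval_exp_mul_eq_coeff (P : Polynomial ℂ) (n : ℕ) :
    (2 * Real.pi)⁻¹ • ∫ θ in (0 : ℝ)..(2 * Real.pi),
      P.eval (exp (θ * I)) * exp (-(n : ℂ) * θ * I) = P.coeff n := by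
  have hexpand : ∀ θ : ℝ, P.eval (exp (θ * I)) * exp (-(n : ℂ) * θ * I) =
      ∑ m ∈ range (P.natDegree + n + 1), P.coeff m * exp (((m - n : ℤ) : ℂ) * θ * I) := by
    intro θ
    rw [eval_eq_sum_range' (n := P.natDegree + n + 1) (by omega), sum_mul]
    refine sum_congr rfl fun m _ ↦ ?_
    rw [mul_assoc, ← exp_nat_mul, ← exp_add]
    push_cast
    ring_nf
  simp_rw [hexpand]
  rw [intervalIntegral.integral_finsetSum fun m _ ↦
    (by fun_prop : Continuous _).intervalIntegrable _ _]
  simp_rw [intervalIntegral.integral_const_mul, integral_exp_int_mul_mul_I, sub_eq_zero,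
    Nat.cast_inj, mul_ite, mul_zero, sum_ite_eq', mem_range]
  rw [if_pos (by omega), Complex.real_smul]
  push_cast
  field_simp

lemma coeff_geom_sum_mul {R : Type*} [Semiring R] (P : Polynomial R) {N l : ℕ} (hl : l ≤ N) :
    ((∑ k ∈ range (N + 1), X ^ k) * P).coeff l = ∑ j ∈ range (l + 1), P.coeff j := by
  simp_rw [sum_mul, finsetSum_coeff, coeff_X_pow_mul', ← sum_filter]
  have : (range (N + 1)).filter (· ≤ l) = range (l + 1) := by
    ext k; simp only [mem_filter, mem_range]; omega
  rw [this, ← sum_range_reflect]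
  refine sum_congr rfl fun k hk ↦ ?_
  congr 1
  have := mem_range.mp hk
  omega

theorem smul_integral_fejer (P : Polynomial ℂ) (N : ℕ) :
    (2 * Real.pi)⁻¹ • ∫ θ in (0 : ℝ)..(2 * Real.pi),
      ((‖∑ k ∈ range (N + 1), exp (θ * I) ^ k‖ ^ 2 : ℝ) : ℂ) * P.eval (exp (θ * I)) =
      ((N : ℝ) + 1) • cesaroMean N P.coeff := by
  set G : Polynomial ℂ := ∑ k ∈ range (N + 1), X ^ k
  have hkernel : ∀ θ : ℝ,
      ((‖∑ k ∈ range (N + 1), exp (θ * I) ^ k‖ ^ 2 : ℝ) : ℂ) * P.eval (exp (θ * I)) =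
        ∑ l ∈ range (N + 1), (G * P).eval (exp (θ * I)) * exp (-(l : ℂ) * θ * I) := by
    intro θ
    have hconj : ∀ l : ℕ, conj (exp (θ * I) ^ l) = exp (-(l : ℂ) * θ * I) := by
      intro l
      rw [map_pow, ← exp_conj, ← exp_nat_mul, map_mul, conj_ofReal, conj_I]
      ring_nf
    rw [ofReal_pow, ← mul_conj', map_sum, mul_sum, eval_mul, eval_finsetSum]
    simp_rw [eval_pow, eval_X, hconj]
    rw [sum_mul]
    exact sum_congr rfl fun l _ ↦ by ring
  simp_rw [hkernel]
  have hGP := (G * P).continuous_eval_exp_mul_I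
  rw [intervalIntegral.integral_finsetSum fun l _ ↦
    Continuous.intervalIntegrable (by fun_prop) _ _, smul_sum]
  simp_rw [smul_integral_eval_exp_mul_eq_coeff]
  rw [cesaroMean_eq_smul_sum_partialSums, smul_inv_smul₀ (by positivity)]
  exact sum_congr rfl fun l hl ↦ coeff_geom_sum_mul P (Nat.lt_succ_iff.mp (mem_range.mp hl))

theorem norm_cesaroMean_coeff_le (P : Polynomial ℂ) (N : ℕ) {C : ℝ}
    (hC : ∀ θ : ℝ, ‖P.eval (exp (θ * I))‖ ≤ C) : ‖cesaroMean N P.coeff‖ ≤ C := by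
  set K : ℝ → ℝ := fun θ ↦ ‖∑ k ∈ range (N + 1), exp (θ * I) ^ k‖ ^ 2
  have hK : Continuous K := by fun_prop
  have hKmass : (2 * Real.pi)⁻¹ * ∫ θ in (0 : ℝ)..(2 * Real.pi), K θ = (N : ℝ) + 1 := by
    have h := smul_integral_fejer 1 N
    simp only [eval_one, mul_one, intervalIntegral.integral_ofReal, cesaroMean, coeff_one] at h
    rw [sum_eq_single 0 (fun n _ hn ↦ by simp [hn]) (by simp)] at h
    simp only [CharP.cast_eq_zero, zero_div, sub_zero, one_smul, if_true, real_smul, mul_one] at h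
    exact_mod_cast h
  have hN : (0 : ℝ) < N + 1 := by positivity
  refine le_of_mul_le_mul_left ?_ hN
  calc ((N : ℝ) + 1) * ‖cesaroMean N P.coeff‖
      = (2 * Real.pi)⁻¹ * ‖∫ θ in (0 : ℝ)..(2 * Real.pi), (K θ : ℂ) * P.eval (exp (θ * I))‖ := by
        rw [← Real.norm_of_nonneg hN.le, ← norm_smul, ← smul_integral_fejer, norm_smul,
          Real.norm_of_nonneg (by positivity)]
    _ ≤ (2 * Real.pi)⁻¹ * ∫ θ in (0 : ℝ)..(2 * Real.pi), K θ * C := by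
        gcongr
        refine intervalIntegral.norm_integral_le_of_norm_le (by positivity)
          (MeasureTheory.ae_of_all _ fun θ _ ↦ ?_)
          ((hK.mul continuous_const).intervalIntegrable _ _)
        rw [norm_mul, norm_real, Real.norm_of_nonneg (by positivity)]
        exact mul_le_mul_of_nonneg_left (hC θ) (by positivity)
    _ = ((N : ℝ) + 1) * C := by
        rw [intervalIntegral.integral_mul_const, ← mul_assoc, hKmass]

end Polynomial

theorem ContinuousLinearMap.tendsto_apply_of_mem_topologicalClosure {ι 𝕜 E F : Type*}
    [NontriviallyNormedField 𝕜] [SeminormedAddCommGroup E] [NormedSpace 𝕜 E]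
    [SeminormedAddCommGroup F] [NormedSpace 𝕜 F] {l : Filter ι} {T : ι → E →L[𝕜] F}
    {A : E →L[𝕜] F} {S : Submodule 𝕜 E} {C : ℝ}
    (hT : ∀ i, ∀ x ∈ S.topologicalClosure, ‖T i x‖ ≤ C * ‖x‖)
    (hS : ∀ x ∈ S, Tendsto (fun i ↦ T i x) l (𝓝 (A x)))
    {x : E} (hx : x ∈ S.topologicalClosure) : Tendsto (fun i ↦ T i x) l (𝓝 (A x)) := by
  set B := S.topologicalClosure
  let G : ι → B →L[𝕜] F := fun i ↦ (T i).comp B.subtypeL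
  have hG : Equicontinuous ((↑) ∘ G) :=
    ((NormedSpace.equicontinuous_TFAE G).out 3 1).mp
      (show ∃ C, ∀ i (y : B), ‖G i y‖ ≤ C * ‖y‖ from ⟨C, fun i y ↦ hT i y y.2⟩)
  have hclosed : IsClosed {y : B | Tendsto (fun i ↦ G i y) l (𝓝 (A y))} :=
    hG.isClosed_setOfPred_tendsto (by fun_prop)
  have hdense : closure (Subtype.val ⁻¹' (S : Set E) : Set B) = Set.univ := by
    have hind : Topology.IsInducing (Subtype.val : B → E) := .subtypeVal
    rw [hind.closure_eq_preimage_closure_image, Set.image_preimage_eq_of_subset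
      (f := (Subtype.val : B → E)) (by rw [Subtype.range_val]; exact S.le_topologicalClosure),
      ← Submodule.topologicalClosure_coe]
    exact Set.eq_univ_of_forall fun y ↦ y.2
  have hmem : (⟨x, hx⟩ : B) ∈ closure (Subtype.val ⁻¹' (S : Set E) : Set B) :=
    hdense ▸ Set.mem_univ _
  exact closure_minimal (t := {y : B | Tendsto (fun i ↦ G i y) l (𝓝 (A y))})
    (fun y hy ↦ hS y hy) hclosed hmem

lemma MvPolynomial.IsHomogeneous.eval_smul {R σ : Type*} [CommSemiring R] {φ : MvPolynomial σ R}
    {m : ℕ} (hφ : φ.IsHomogeneous m) (t : R) (x : σ → R) :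
    eval (t • x) φ = t ^ m * eval x φ := by
  rw [eval_eq, eval_eq, mul_sum]
  refine sum_congr rfl fun s hs ↦ ?_
  have hdeg : ∑ i ∈ s.support, s i = m := by
    simpa [Finsupp.weight, Finsupp.linearCombination, Finsupp.sum] using
      hφ (mem_support_iff.mp hs)
  simp_rw [Pi.smul_apply, smul_eq_mul, mul_pow, prod_mul_distrib, prod_pow_eq_pow_sum, hdeg]
  ring

section BallAlgebra

variable {d : ℕ}

lemma polyMap_apply (p : MvPolynomial (Fin d) ℂ) (z : CBall d) :
    polyMap d p z = eval (fun i ↦ (z : Cd d) i) p := by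
  induction p using MvPolynomial.induction_on with
  | C a => simp [polyMap]
  | add p q hp hq => simp [hp, hq]
  | mul_X p i hp =>
    rw [map_mul, ContinuousMap.mul_apply, hp]
    simp [polyMap, coordFn]

/-- The polynomial `t ↦ p (t z)` on the complex line through `z`. -/
def radialPoly (p : MvPolynomial (Fin d) ℂ) (z : CBall d) : Polynomial ℂ :=
  ∑ m ∈ range (p.totalDegree + 1), Polynomial.monomial m (polyMap d (homogeneousComponent m p) z)

lemma coeff_radialPoly (p : MvPolynomial (Fin d) ℂ) (z : CBall d) (m : ℕ) :
    (radialPoly p z).coeff m = polyMap d (homogeneousComponent m p) z := by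
  rw [radialPoly, Polynomial.finsetSum_coeff]
  simp_rw [Polynomial.coeff_monomial]
  rw [sum_ite_eq', ite_eq_left_iff, mem_range]
  intro hm
  rw [homogeneousComponent_eq_zero m p (by omega), map_zero, ContinuousMap.zero_apply]

lemma eval_exp_mul_I_radialPoly (p : MvPolynomial (Fin d) ℂ) (z : CBall d) (θ : ℝ) :
    (radialPoly p z).eval (exp (θ * I)) = polyMap d p (rotPt d θ z) := by
  conv_rhs => rw [← sum_homogeneousComponent p]
  rw [radialPoly, Polynomial.eval_finsetSum, map_sum, ContinuousMap.sum_apply]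
  refine sum_congr rfl fun m _ ↦ ?_
  rw [Polynomial.eval_monomial, polyMap_apply, polyMap_apply, mul_comm,
    ← (homogeneousComponent_isHomogeneous m p).eval_smul]
  rfl

lemma continuous_rotPt_uncurry : Continuous fun q : CBall d × ℝ ↦ rotPt d q.2 q.1 :=
  Continuous.subtype_mk (by fun_prop) _

lemma continuous_circAvg_integrand (n : ℕ) (f : C(CBall d, ℂ)) :
    Continuous fun q : CBall d × ℝ ↦ f (rotPt d q.2 q.1) * exp (-(n : ℂ) * q.2 * I) :=
  (f.continuous.comp continuous_rotPt_uncurry).mul (by fun_prop)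

lemma intervalIntegrable_circAvg_integrand (n : ℕ) (f : C(CBall d, ℂ)) (z : CBall d) :
    IntervalIntegrable (fun θ : ℝ ↦ f (rotPt d θ z) * exp (-(n : ℂ) * θ * I))
      MeasureTheory.volume 0 (2 * Real.pi) :=
  ((continuous_circAvg_integrand n f).comp
    (continuous_const.prodMk continuous_id)).intervalIntegrable _ _

lemma continuous_circAvg (n : ℕ) (f : C(CBall d, ℂ)) : Continuous (circAvg d n f) :=
  (intervalIntegral.continuous_parametric_intervalIntegral_of_continuous'
    (continuous_circAvg_integrand n f) _ _).const_smul ((2 * Real.pi)⁻¹ : ℝ)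

lemma norm_circAvg_le (n : ℕ) (f : C(CBall d, ℂ)) (z : CBall d) : ‖circAvg d n f z‖ ≤ ‖f‖ := by
  have hbound : ∀ θ : ℝ, ‖f (rotPt d θ z) * exp (-(n : ℂ) * θ * I)‖ ≤ ‖f‖ := by
    intro θ
    rw [norm_mul, show -(n : ℂ) * θ * I = ((-(n * θ) : ℝ) : ℂ) * I by push_cast; ring,
      norm_exp_ofReal_mul_I, mul_one]
    exact f.norm_coe_le_norm _
  rw [circAvg, norm_smul, Real.norm_of_nonneg (by positivity)]
  calc (2 * Real.pi)⁻¹ * ‖∫ θ in (0 : ℝ)..(2 * Real.pi), f (rotPt d θ z) * exp (-(n : ℂ) * θ * I)‖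
      ≤ (2 * Real.pi)⁻¹ * (‖f‖ * |2 * Real.pi - 0|) := by
        gcongr
        exact intervalIntegral.norm_integral_le_of_norm_le_const fun θ _ ↦ hbound θ
    _ = ‖f‖ := by
        rw [sub_zero, abs_of_pos Real.two_pi_pos]
        field_simp

def circAvgCLM (d n : ℕ) : C(CBall d, ℂ) →L[ℂ] C(CBall d, ℂ) :=
  LinearMap.mkContinuous
    { toFun := fun f ↦ ⟨circAvg d n f, continuous_circAvg n f⟩
      map_add' := fun f g ↦ by
        ext z
        simp only [circAvg, ContinuousMap.coe_mk, ContinuousMap.add_apply, add_mul,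
          intervalIntegral.integral_add (intervalIntegrable_circAvg_integrand n f z)
            (intervalIntegrable_circAvg_integrand n g z), smul_add]
      map_smul' := fun c f ↦ by
        ext z
        simp only [circAvg, ContinuousMap.coe_mk, ContinuousMap.smul_apply, smul_eq_mul,
          mul_assoc, intervalIntegral.integral_const_mul, RingHom.id_apply]
        rw [mul_smul_comm] }
    1 fun f ↦ by
      rw [one_mul, ContinuousMap.norm_le _ (norm_nonneg f)]
      exact norm_circAvg_le n f

@[simp]
lemma circAvgCLM_apply (n : ℕ) (f : C(CBall d, ℂ)) (z : CBall d) :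
    circAvgCLM d n f z = circAvg d n f z := rfl

lemma norm_circAvgCLM_le (n : ℕ) : ‖circAvgCLM d n‖ ≤ 1 :=
  LinearMap.mkContinuous_norm_le _ zero_le_one _

lemma circAvgCLM_polyMap (n : ℕ) (p : MvPolynomial (Fin d) ℂ) :
    circAvgCLM d n (polyMap d p) = polyMap d (homogeneousComponent n p) := by
  ext z
  simp_rw [circAvgCLM_apply, circAvg, ← eval_exp_mul_I_radialPoly,
    Polynomial.smul_integral_eval_exp_mul_eq_coeff, coeff_radialPoly]

lemma ballAlg_eq_topologicalClosure :
    ballAlg d = (LinearMap.range (polyMap d).toLinearMap).topologicalClosure := by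
  rw [Submodule.topologicalClosure_coe, LinearMap.coe_range]
  rfl

def homogeneousPolyMaps (d n : ℕ) : Submodule ℂ C(CBall d, ℂ) :=
  (homogeneousSubmodule (Fin d) ℂ n).map (polyMap d).toLinearMap

lemma isClosed_homogeneousPolyMaps (n : ℕ) :
    IsClosed (homogeneousPolyMaps d n : Set C(CBall d, ℂ)) :=
  haveI : Module.Finite ℂ (homogeneousSubmodule (Fin d) ℂ n) :=
    Module.Finite.iff_fg.mpr (homogeneousSubmodule_fg (Fin d) ℂ n)
  haveI : Module.Finite ℂ (homogeneousPolyMaps d n) := Module.Finite.map _ _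
  Submodule.closed_of_finiteDimensional _

lemma circAvgCLM_mem_homogeneousPolyMaps {f : C(CBall d, ℂ)} (hf : f ∈ ballAlg d) (n : ℕ) :
    circAvgCLM d n f ∈ homogeneousPolyMaps d n := by
  refine closure_minimal (s := Set.range (polyMap d)) ?_
    ((isClosed_homogeneousPolyMaps n).preimage (circAvgCLM d n).continuous) hf
  rintro _ ⟨p, rfl⟩
  exact ⟨_, homogeneousComponent_mem n p, (circAvgCLM_polyMap n p).symm⟩

def cesaroCLM (d N : ℕ) : C(CBall d, ℂ) →L[ℂ] C(CBall d, ℂ) :=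
  cesaroMean N (circAvgCLM d)

lemma cesaroCLM_apply (N : ℕ) (f : C(CBall d, ℂ)) :
    cesaroCLM d N f = cesaroMean N fun n ↦ circAvgCLM d n f := by
  simp [cesaroCLM, cesaroMean]

lemma norm_cesaroCLM_polyMap_le (N : ℕ) (p : MvPolynomial (Fin d) ℂ) :
    ‖cesaroCLM d N (polyMap d p)‖ ≤ ‖polyMap d p‖ := by
  refine (ContinuousMap.norm_le _ (norm_nonneg _)).mpr fun z ↦ ?_
  have hz : cesaroCLM d N (polyMap d p) z = cesaroMean N (radialPoly p z).coeff := by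
    simp [cesaroCLM_apply, cesaroMean, circAvgCLM_polyMap, coeff_radialPoly]
  rw [hz]
  refine Polynomial.norm_cesaroMean_coeff_le _ N fun θ ↦ ?_
  rw [eval_exp_mul_I_radialPoly]
  exact (polyMap d p).norm_coe_le_norm _

lemma norm_cesaroCLM_le (N : ℕ) {f : C(CBall d, ℂ)} (hf : f ∈ ballAlg d) :
    ‖cesaroCLM d N f‖ ≤ ‖f‖ := by
  refine closure_minimal (s := Set.range (polyMap d)) ?_
    (isClosed_le (cesaroCLM d N).continuous.norm continuous_norm) hf
  rintro _ ⟨p, rfl⟩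
  exact norm_cesaroCLM_polyMap_le N p

lemma tendsto_cesaroCLM_polyMap (p : MvPolynomial (Fin d) ℂ) :
    Tendsto (fun N ↦ cesaroCLM d N (polyMap d p)) atTop (𝓝 (polyMap d p)) := by
  simp_rw [cesaroCLM_apply, circAvgCLM_polyMap]
  refine tendsto_cesaroMean
    (tendsto_atTop_of_eventually_const (i₀ := p.totalDegree + 1) fun n hn ↦ ?_)
  rw [← map_sum, ← sum_range_add_sum_Ico _ hn, sum_homogeneousComponent,
    sum_eq_zero fun j hj ↦ homogeneousComponent_eq_zero j p (by simp at hj; omega), add_zero]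

lemma tendsto_cesaroCLM {f : C(CBall d, ℂ)} (hf : f ∈ ballAlg d) :
    Tendsto (fun N ↦ cesaroCLM d N f) atTop (𝓝 f) := by
  rw [ballAlg_eq_topologicalClosure] at hf
  refine ContinuousLinearMap.tendsto_apply_of_mem_topologicalClosure (A := .id ℂ _) (C := 1)
    (fun N g hg ↦ ?_) (fun g hg ↦ ?_) hf
  · rw [one_mul]
    exact norm_cesaroCLM_le N (ballAlg_eq_topologicalClosure ▸ hg)
  · obtain ⟨p, rfl⟩ := LinearMap.mem_range.mp hg
    exact tendsto_cesaroCLM_polyMap p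

end BallAlgebra

open Filter Topology in
/-- For every `f` in the ball algebra `B`, the homogeneous
components `f_n` (circle averages) belong to `B`, are restrictions of homogeneous
polynomials of degree `n`, satisfy `‖f_n‖ ≤ ‖f‖`, and the Cesàro means
`σ_N(f) = Σ_{n=0}^{N} (1 − n/(N+1)) f_n` converge to `f` uniformly on the closed
ball. -/
theorem stmt18 (d : ℕ) (f : C(CBall d, ℂ)) (hf : f ∈ ballAlg d) :
    ∃ g : ℕ → C(CBall d, ℂ),
      (∀ n : ℕ, (∀ z : CBall d, g n z = circAvg d n f z) ∧
        g n ∈ ballAlg d ∧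
        (∃ p : MvPolynomial (Fin d) ℂ, p.IsHomogeneous n ∧ g n = polyMap d p) ∧
        ‖g n‖ ≤ ‖f‖) ∧
      Tendsto (fun N : ℕ => ∑ n ∈ Finset.range (N + 1),
          (1 - (n : ℝ) / ((N : ℝ) + 1)) • g n) atTop (𝓝 f) := by
  refine ⟨fun n ↦ circAvgCLM d n f, fun n ↦ ?_, ?_⟩
  · obtain ⟨q, hq, hqf⟩ := circAvgCLM_mem_homogeneousPolyMaps hf n
    refine ⟨fun z ↦ rfl, subset_closure ⟨q, hqf⟩,
      ⟨q, (mem_homogeneousSubmodule n q).mp hq, hqf.symm⟩, ?_⟩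
    calc ‖circAvgCLM d n f‖ ≤ ‖circAvgCLM d n‖ * ‖f‖ := (circAvgCLM d n).le_opNorm f
      _ ≤ ‖f‖ := mul_le_of_le_one_left (norm_nonneg f) (norm_circAvgCLM_le n)
  · simpa [cesaroCLM_apply, cesaroMean] using tendsto_cesaroCLM hf
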